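/- arXiv:2307.10158 — 2 statements merged into one kernel-verified Lean document; each statement's English description precedes it below -/
import Mathlib

section
/- Let pen be a real-valued polyhedral gauge on ℝ^p, i.e. pen(b) = max{⟨u_1,b⟩,…,⟨u_k,b⟩} for finitely many vectors u_1,…,u_k ∈ ℝ^p with u_1 = 0, and let B* = conv{u_1,…,u_k}. Then for every β ∈ ℝ^p and every b in the relative interior of ∂pen(β), the pattern equivalence class C_β equals the relative interior of the normal cone of B* at b, i.e. C_β = ri(N_{B*}(b)). -/
open scoped RealInnerProductSpace

noncomputable section

/-- Convert a plain coordinate vector to an element of Euclidean space. -/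
def toEuc {n : ℕ} (v : Fin n → ℝ) : EuclideanSpace ℝ (Fin n) :=
  (WithLp.equiv 2 (Fin n → ℝ)).symm v

/-- The subdifferential of `φ : ℝ^p → ℝ` at `β`:
`∂φ(β) = {s : φ(β) + ⟪s, b − β⟫ ≤ φ(b) for all b}`. -/
def subdiff {p : ℕ} (φ : EuclideanSpace ℝ (Fin p) → ℝ) (β : EuclideanSpace ℝ (Fin p)) :
    Set (EuclideanSpace ℝ (Fin p)) :=
  {s | ∀ b, φ β + ⟪s, b - β⟫ ≤ φ b}

/-- `S_{X,λpen}(y)`: the set of minimizers of `b ↦ (1/2)‖y − Xb‖₂² + λ·pen(b)`. -/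
def Smin {n p : ℕ} (X : Matrix (Fin n) (Fin p) ℝ) (lam : ℝ)
    (pen : EuclideanSpace ℝ (Fin p) → ℝ) (y : EuclideanSpace ℝ (Fin n)) :
    Set (EuclideanSpace ℝ (Fin p)) :=
  {b | ∀ b', (1/2) * ‖y - toEuc (X.mulVec b)‖^2 + lam * pen b
        ≤ (1/2) * ‖y - toEuc (X.mulVec b')‖^2 + lam * pen (WithLp.toLp 2 b')}

/-- The row space of a matrix `X`: `{Xᵀz : z ∈ ℝ^n}`. -/
def rowSpace {n p : ℕ} (X : Matrix (Fin n) (Fin p) ℝ) : Set (EuclideanSpace ℝ (Fin p)) :=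
  Set.range fun z : EuclideanSpace ℝ (Fin n) => toEuc (X.transpose.mulVec z)

/-- The normal cone of a set `K` at `x`: `{s : ⟪s, b − x⟫ ≤ 0 for all b ∈ K}`. -/
def normalCone' {p : ℕ} (K : Set (EuclideanSpace ℝ (Fin p))) (x : EuclideanSpace ℝ (Fin p)) :
    Set (EuclideanSpace ℝ (Fin p)) :=
  {s | ∀ b ∈ K, ⟪s, b - x⟫ ≤ 0}

/-- The supremum norm `‖x‖_∞` on Euclidean space. -/
def supNorm {p : ℕ} (x : EuclideanSpace ℝ (Fin p)) : ℝ := ⨆ i, abs (x i)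

/-- `F` is an (exposed) face of `P`: `F = {x ∈ P : ⟪a,x⟫ = c}` for some valid inequality
`⟪a,x⟫ ≤ c` of `P`. -/
def IsFace {p : ℕ} (P F : Set (EuclideanSpace ℝ (Fin p))) : Prop :=
  ∃ (a : EuclideanSpace ℝ (Fin p)) (c : ℝ),
    (∀ x ∈ P, ⟪a, x⟫ ≤ c) ∧ F = {x ∈ P | ⟪a, x⟫ = c}

/-!
Write `pen = max_i ⟪u i, ·⟫` and call `i` active at `x` when `⟪u i, x⟫ = pen x`. The vertex `u i`
lies in `∂pen(x)` exactly when `i` is active at `x`, and moving from `y` slightly against `x` shows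
that `∂pen(y) ⊆ ∂pen(x)` as soon as every index active at `y` is active at `x`. So `C_β` is the set
of points with the same active set as `β`.

A linear form attaining its maximum over a set at a point of the intrinsic interior is constant on
the set. Applied to `∂pen(β)` at `b`, this identifies `N_{B*}(b) = {x | b ∈ ∂pen(x)}` with the cone
of points at which every index active at `β` is active; applied to that cone, which contains `β`,
it shows that its relative interior is where no further index is active.
-/

open Set Filter Topology

section IntrinsicInterior

variable {V : Type*} [AddCommGroup V] [Module ℝ V]

theorem LinearMap.eq_zero_of_mem_affineSpan {s : Set V} (f : V →ₗ[ℝ] ℝ) (hf : ∀ y ∈ s, f y = 0)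
    {y : V} (hy : y ∈ affineSpan ℝ s) : f y = 0 :=
  (affineSpan_le (Q := (LinearMap.ker f).toAffineSubspace)).2 hf hy

variable [TopologicalSpace V]

theorem mem_intrinsicInterior_of_isOpen {s U : Set V} {x : V} (hU : IsOpen U) (hxU : x ∈ U)
    (hxs : x ∈ s) (hUs : (affineSpan ℝ s : Set V) ∩ U ⊆ s) : x ∈ intrinsicInterior ℝ s :=
  mem_intrinsicInterior.2 ⟨⟨x, subset_affineSpan ℝ s hxs⟩,
    mem_interior.2 ⟨Subtype.val ⁻¹' U, fun z hz => hUs ⟨z.2, hz⟩,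
      hU.preimage continuous_subtype_val, hxU⟩, rfl⟩

variable [IsTopologicalAddGroup V] [ContinuousSMul ℝ V]

theorem eventually_lineMap_mem_of_mem_intrinsicInterior {s : Set V} {x y : V}
    (hx : x ∈ intrinsicInterior ℝ s) (hy : y ∈ affineSpan ℝ s) :
    ∀ᶠ t in 𝓝 (0 : ℝ), AffineMap.lineMap x y t ∈ s := by
  obtain ⟨x', hx', rfl⟩ := mem_intrinsicInterior.1 hx
  let f : ℝ → affineSpan ℝ s := fun t =>
    ⟨AffineMap.lineMap (x' : V) y t, AffineMap.lineMap_mem t x'.2 hy⟩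
  have hf : Continuous f := AffineMap.lineMap_continuous.subtype_mk _
  have hf0 : f 0 = x' := Subtype.ext (AffineMap.lineMap_apply_zero _ _)
  have := hf.continuousAt.preimage_mem_nhds (hf0 ▸ isOpen_interior.mem_nhds hx')
  exact mem_of_superset this fun t ht =>
    interior_subset (s := ((↑) : affineSpan ℝ s → V) ⁻¹' s) ht

theorem IsMaxOn.eq_of_mem_intrinsicInterior {s : Set V} {f : V →ₗ[ℝ] ℝ} {x y : V}
    (hf : IsMaxOn f s x) (hx : x ∈ intrinsicInterior ℝ s) (hy : y ∈ s) : f y = f x := by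
  obtain ⟨t, hts, ht⟩ := ((eventually_lineMap_mem_of_mem_intrinsicInterior hx
    (subset_affineSpan ℝ s hy)).filter_mono nhdsWithin_le_nhds).and
      (self_mem_nhdsWithin : Iio (0 : ℝ) ∈ 𝓝[<] 0) |>.exists
  have hle : f x + t * (f y - f x) ≤ f x := by
    simpa [AffineMap.lineMap_apply_module', add_comm] using hf hts
  exact le_antisymm (hf hy) (by nlinarith)

end IntrinsicInterior

section MaxInner

variable {E ι : Type*} [NormedAddCommGroup E] [InnerProductSpace ℝ E] [Fintype ι] [Nonempty ι]

def maxInner (u : ι → E) (x : E) : ℝ :=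
  Finset.univ.sup' Finset.univ_nonempty fun i => ⟪u i, x⟫

def activeSet (u : ι → E) (x : E) : Set ι :=
  {i | ⟪u i, x⟫ = maxInner u x}

variable (u : ι → E)

theorem mem_activeSet {i : ι} {x : E} : i ∈ activeSet u x ↔ ⟪u i, x⟫ = maxInner u x := Iff.rfl

theorem maxInner_le_iff {x : E} {c : ℝ} : maxInner u x ≤ c ↔ ∀ i, ⟪u i, x⟫ ≤ c := by
  simp [maxInner]

theorem inner_le_maxInner (i : ι) (x : E) : ⟪u i, x⟫ ≤ maxInner u x :=
  (maxInner_le_iff u).1 le_rfl i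

theorem activeSet_nonempty (x : E) : (activeSet u x).Nonempty := by
  obtain ⟨i, -, hi⟩ := Finset.exists_mem_eq_sup' Finset.univ_nonempty fun i => ⟪u i, x⟫
  exact ⟨i, hi.symm⟩

theorem maxInner_zero : maxInner u 0 = 0 := by
  obtain ⟨i, hi⟩ := activeSet_nonempty u 0
  rw [← hi, inner_zero_right]

theorem maxInner_add_le (x y : E) : maxInner u (x + y) ≤ maxInner u x + maxInner u y :=
  (maxInner_le_iff u).2 fun i => by
    rw [inner_add_right]
    exact add_le_add (inner_le_maxInner u i x) (inner_le_maxInner u i y)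

theorem continuous_maxInner : Continuous (maxInner u) :=
  Continuous.finset_sup'_apply _ fun _ _ => continuous_const.inner continuous_id

theorem isOpen_setOf_activeSet_subset (S : Set ι) : IsOpen {x | activeSet u x ⊆ S} := by
  simp only [Set.subset_def, Set.ofPred_forall]
  refine isOpen_iInter_of_finite fun i => ?_
  by_cases hi : i ∈ S
  · simp [hi]
  · have hc : Continuous fun x : E => ⟪u i, x⟫ := by fun_prop
    convert (isClosed_eq hc (continuous_maxInner u)).isOpen_compl using 1
    ext x
    simp [hi, activeSet]

/-- A form inactive at `x` is inactive at `y`, so for small `t` it stays below the maximum at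
`y - t • x`. -/
theorem eventually_maxInner_sub_smul_le {x y : E} (h : activeSet u y ⊆ activeSet u x) :
    ∀ᶠ t in 𝓝 (0 : ℝ), maxInner u (y - t • x) ≤ maxInner u y - t * maxInner u x := by
  simp only [maxInner_le_iff, inner_sub_right, real_inner_smul_right]
  refine eventually_all.2 fun i => ?_
  by_cases hx : i ∈ activeSet u x
  · refine Eventually.of_forall fun t => ?_
    rw [(mem_activeSet u).1 hx]
    linarith [inner_le_maxInner u i y]
  · have hy : ⟪u i, y⟫ < maxInner u y :=
      (inner_le_maxInner u i y).lt_of_ne fun hy => hx (h hy)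
    refine (ContinuousAt.eventually_lt (by fun_prop) (by fun_prop) (by simpa using hy)).mono
      fun t ht => ht.le

theorem intrinsicInterior_setOf_activeSet_supset (β : E) :
    intrinsicInterior ℝ {x | activeSet u β ⊆ activeSet u x} =
      {x | activeSet u x = activeSet u β} := by
  set N := {x | activeSet u β ⊆ activeSet u x}
  have hN : ∀ {i j z}, i ∈ activeSet u β → j ∈ activeSet u β → z ∈ N →
      innerₛₗ ℝ (u i - u j) z = 0 := fun hi hj hz => by
    rw [innerₛₗ_apply_apply, inner_sub_left, sub_eq_zero]
    exact (hz hi).trans (hz hj).symm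
  ext x
  constructor
  · intro hx
    have hxN : x ∈ N := intrinsicInterior_subset hx
    obtain ⟨i₀, hi₀⟩ := activeSet_nonempty u β
    refine (Set.Subset.antisymm ?_ hxN)
    intro i hi
    have hmax : IsMaxOn (innerₛₗ ℝ (u i - u i₀)) N x := fun z hz => by
      simp only [Set.mem_ofPred_eq, innerₛₗ_apply_apply, inner_sub_left]
      linarith [inner_le_maxInner u i z, (mem_activeSet u).1 hi, (mem_activeSet u).1 (hz hi₀),
        (mem_activeSet u).1 (hxN hi₀)]
    have := hmax.eq_of_mem_intrinsicInterior hx (subset_rfl : activeSet u β ⊆ _)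
    simp only [innerₛₗ_apply_apply, inner_sub_left] at this
    rw [mem_activeSet]
    linarith [(mem_activeSet u).1 hi, (mem_activeSet u).1 (hxN hi₀), (mem_activeSet u).1 hi₀]
  · intro hx
    refine mem_intrinsicInterior_of_isOpen (isOpen_setOf_activeSet_subset u (activeSet u β))
      hx.subset hx.superset ?_
    rintro y ⟨hyN, hyU⟩ i hi
    obtain ⟨j, hj⟩ := activeSet_nonempty u y
    have := LinearMap.eq_zero_of_mem_affineSpan _ (fun z hz => hN hi (hyU hj) hz) hyN
    simp only [innerₛₗ_apply_apply, inner_sub_left, sub_eq_zero] at this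
    exact this.trans hj

end MaxInner

section Subdifferential

variable {p : ℕ}

theorem mem_subdiff_iff_of_subadditive {φ : EuclideanSpace ℝ (Fin p) → ℝ} (h0 : φ 0 = 0)
    (hadd : ∀ x y, φ (x + y) ≤ φ x + φ y) {x s : EuclideanSpace ℝ (Fin p)} :
    s ∈ subdiff φ x ↔ (∀ z, ⟪s, z⟫ ≤ φ z) ∧ ⟪s, x⟫ = φ x := by
  simp only [subdiff, Set.mem_ofPred_eq, inner_sub_right]
  refine ⟨fun h => ?_, fun ⟨hle, heq⟩ y => by linarith [hle y]⟩
  have hle : ∀ z, ⟪s, z⟫ ≤ φ z := fun z => by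
    have := h (x + z)
    rw [inner_add_right] at this
    linarith [hadd x z]
  refine ⟨hle, le_antisymm (hle x) ?_⟩
  have := h 0
  rw [inner_zero_right, h0] at this
  linarith

theorem subdiff_subset_of_mem_intrinsicInterior {φ : EuclideanSpace ℝ (Fin p) → ℝ}
    (h0 : φ 0 = 0) (hadd : ∀ x y, φ (x + y) ≤ φ x + φ y) {β x b : EuclideanSpace ℝ (Fin p)}
    (hb : b ∈ intrinsicInterior ℝ (subdiff φ β)) (hbx : b ∈ subdiff φ x) :
    subdiff φ β ⊆ subdiff φ x := by
  rw [mem_subdiff_iff_of_subadditive h0 hadd] at hbx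
  have hmax : IsMaxOn (innerₛₗ ℝ x) (subdiff φ β) b := fun s hs => by
    rw [Set.mem_ofPred_eq, innerₛₗ_apply_apply, innerₛₗ_apply_apply, real_inner_comm s,
      real_inner_comm b, hbx.2]
    exact ((mem_subdiff_iff_of_subadditive h0 hadd).1 hs).1 x
  intro s hs
  have hsx := hmax.eq_of_mem_intrinsicInterior hb hs
  rw [innerₛₗ_apply_apply, innerₛₗ_apply_apply, real_inner_comm s, real_inner_comm b] at hsx
  exact (mem_subdiff_iff_of_subadditive h0 hadd).2
    ⟨((mem_subdiff_iff_of_subadditive h0 hadd).1 hs).1, hsx.trans hbx.2⟩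

theorem normalCone'_convexHull (K : Set (EuclideanSpace ℝ (Fin p)))
    (b : EuclideanSpace ℝ (Fin p)) :
    normalCone' (convexHull ℝ K) b = normalCone' K b := by
  refine Subset.antisymm (fun s hs y hy => hs y (subset_convexHull ℝ K hy)) fun s hs => ?_
  have hconv : Convex ℝ {y | ⟪s, y - b⟫ ≤ 0} := by
    simpa only [inner_sub_right, sub_nonpos, innerₛₗ_apply_apply] using
      convex_halfSpace_le (innerₛₗ ℝ s).isLinear ⟪s, b⟫
  exact fun y hy => convexHull_min hs hconv hy

variable {ι : Type*} [Fintype ι] [Nonempty ι] (u : ι → EuclideanSpace ℝ (Fin p))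

theorem mem_subdiff_maxInner {x s : EuclideanSpace ℝ (Fin p)} :
    s ∈ subdiff (maxInner u) x ↔ (∀ z, ⟪s, z⟫ ≤ maxInner u z) ∧ ⟪s, x⟫ = maxInner u x :=
  mem_subdiff_iff_of_subadditive (maxInner_zero u) (maxInner_add_le u)

theorem subdiff_maxInner_subset_iff {x y : EuclideanSpace ℝ (Fin p)} :
    subdiff (maxInner u) y ⊆ subdiff (maxInner u) x ↔ activeSet u y ⊆ activeSet u x := by
  have hvertex : ∀ {i z}, u i ∈ subdiff (maxInner u) z ↔ i ∈ activeSet u z := fun {i z} =>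
    (mem_subdiff_maxInner u).trans (and_iff_right fun w => inner_le_maxInner u i w)
  refine ⟨fun h i hi => hvertex.1 (h (hvertex.2 hi)), fun h s hs => ?_⟩
  obtain ⟨hle, hy⟩ := (mem_subdiff_maxInner u).1 hs
  obtain ⟨t, hmax, ht⟩ := ((eventually_maxInner_sub_smul_le u h).filter_mono
    nhdsWithin_le_nhds).and (self_mem_nhdsWithin : Ioi (0 : ℝ) ∈ 𝓝[>] 0) |>.exists
  have := hle (y - t • x)
  rw [inner_sub_right, real_inner_smul_right, hy] at this
  refine (mem_subdiff_maxInner u).2 ⟨hle, le_antisymm (hle x) ?_⟩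
  nlinarith

theorem mem_normalCone'_range_iff {b x : EuclideanSpace ℝ (Fin p)} :
    x ∈ normalCone' (range u) b ↔ maxInner u x ≤ ⟪b, x⟫ := by
  simp [normalCone', maxInner_le_iff, inner_sub_right, real_inner_comm x]

theorem normalCone'_convexHull_range_eq {β b : EuclideanSpace ℝ (Fin p)}
    (hb : b ∈ intrinsicInterior ℝ (subdiff (maxInner u) β)) :
    normalCone' (convexHull ℝ (range u)) b = {x | activeSet u β ⊆ activeSet u x} := by
  have hbβ := (mem_subdiff_maxInner u).1 (intrinsicInterior_subset hb)
  ext x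
  rw [normalCone'_convexHull, mem_normalCone'_range_iff, Set.mem_ofPred_eq,
    ← subdiff_maxInner_subset_iff]
  refine ⟨fun h => subdiff_subset_of_mem_intrinsicInterior (maxInner_zero u) (maxInner_add_le u)
    hb ((mem_subdiff_maxInner u).2 ⟨hbβ.1, le_antisymm (hbβ.1 x) h⟩), fun h => ?_⟩
  exact ((mem_subdiff_maxInner u).1 (h (intrinsicInterior_subset hb))).2.ge

end Subdifferential

theorem pattern_class_eq_ri_normalCone_general {p k : ℕ}
    (u : Fin (k + 1) → EuclideanSpace ℝ (Fin p))
    (pen : EuclideanSpace ℝ (Fin p) → ℝ)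
    (hpen : ∀ x, pen x = Finset.univ.sup' Finset.univ_nonempty fun i => ⟪u i, x⟫)
    (β b : EuclideanSpace ℝ (Fin p))
    (hb : b ∈ intrinsicInterior ℝ (subdiff pen β)) :
    {x | subdiff pen x = subdiff pen β}
      = intrinsicInterior ℝ (normalCone' (convexHull ℝ (Set.range u)) b) := by
  obtain rfl : pen = maxInner u := funext hpen
  rw [normalCone'_convexHull_range_eq u hb, intrinsicInterior_setOf_activeSet_supset]
  ext x
  simp only [Set.mem_ofPred_eq, Set.Subset.antisymm_iff, subdiff_maxInner_subset_iff]

/-- For a real-valued polyhedral gauge `pen` with `B* = conv{u_1,…,u_k}`,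
the pattern equivalence class `C_β` equals the relative (intrinsic) interior of the normal
cone of `B*` at any `b ∈ ri(∂pen(β))`. -/
theorem pattern_class_eq_ri_normalCone {p k : ℕ}
    (u : Fin (k + 1) → EuclideanSpace ℝ (Fin p)) (hu : u 0 = 0)
    (pen : EuclideanSpace ℝ (Fin p) → ℝ)
    (hpen : ∀ x, pen x = Finset.univ.sup' Finset.univ_nonempty fun i => ⟪u i, x⟫)
    (β b : EuclideanSpace ℝ (Fin p))
    (hb : b ∈ intrinsicInterior ℝ (subdiff pen β)) :
    {x | subdiff pen x = subdiff pen β}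
      = intrinsicInterior ℝ (normalCone' (convexHull ℝ (Set.range u)) b) :=
  pattern_class_eq_ri_normalCone_general u pen hpen β b hb
end
end

section
/- Let X ∈ ℝ^{n×p}, λ > 0, let pen be a real-valued polyhedral gauge on ℝ^p (pen(b) = max{⟨u_1,b⟩,…,⟨u_k,b⟩} with u_1 = 0), and let β ∈ ℝ^p. The following three statements are equivalent: (i) there exist y ∈ ℝ^n and β̂ ∈ S_{X,λpen}(y) with ∂pen(β̂) = ∂pen(β) (i.e. the pattern of β is accessible with respect to X and λ·pen); (ii) row(X) ∩ ∂pen(β) ≠ ∅; (iii) for every b ∈ ℝ^p, Xβ = Xb implies pen(β) ≤ pen(b). -/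
open scoped RealInnerProductSpace

noncomputable section

/-!
Penalized least squares is a convex problem, so `βh ∈ S_{X,λpen}(y)` exactly when
`Xᵀ(y - Xβh)/λ ∈ ∂pen(βh)`; conversely, if `Xᵀz ∈ ∂pen(β)` then `β ∈ S_{X,λpen}(Xβ + λz)`.
This gives (i) ⇔ (ii). Since `row(X) = (ker X)ᗮ`, (ii) says `0 ∈ ∂pen(β) + (ker X)ᗮ`, the
optimality condition for minimizing `pen` over `β + ker X`, which is (iii). Its necessity in the
polyhedral case is a theorem of the alternative: if the convex hull of the active `u_i` misses
`(ker X)ᗮ`, separating the two gives `h ∈ ker X` with `⟪u_i, h⟫ < 0` for every active `i`, and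
then `pen(β + t h) < pen β` for small `t > 0`.
-/

open Filter Topology Set

section PolyhedralMax

variable {E ι : Type*} [NormedAddCommGroup E] [InnerProductSpace ℝ E]
  {s : Finset ι} (hs : s.Nonempty) (u : ι → E)

theorem convexOn_sup'_inner : ConvexOn ℝ univ fun x => s.sup' hs fun i => ⟪u i, x⟫ := by
  refine ⟨convex_univ, fun x _ y _ a b ha hb _ => Finset.sup'_le _ _ fun i hi => ?_⟩
  rw [inner_add_right, real_inner_smul_right, real_inner_smul_right, smul_eq_mul, smul_eq_mul]
  exact add_le_add (mul_le_mul_of_nonneg_left (Finset.le_sup' (fun i => ⟪u i, x⟫) hi) ha)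
    (mul_le_mul_of_nonneg_left (Finset.le_sup' (fun i => ⟪u i, y⟫) hi) hb)

theorem exists_sup'_inner_add_smul_lt {β h : E}
    (hh : ∀ i ∈ s, ⟪u i, β⟫ = s.sup' hs (fun i => ⟪u i, β⟫) → ⟪u i, h⟫ < 0) :
    ∃ t : ℝ, s.sup' hs (fun i => ⟪u i, β + t • h⟫) < s.sup' hs (fun i => ⟪u i, β⟫) := by
  set M := s.sup' hs fun i => ⟪u i, β⟫
  suffices ∀ᶠ t in 𝓝[>] (0 : ℝ), ∀ i ∈ s, ⟪u i, β + t • h⟫ < M by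
    obtain ⟨t, ht⟩ := this.exists
    exact ⟨t, (Finset.sup'_lt_iff hs).2 ht⟩
  refine (eventually_all_finset s).2 fun i hi => ?_
  simp only [inner_add_right, real_inner_smul_right]
  rcases (Finset.le_sup' (fun i => ⟪u i, β⟫) hi).eq_or_lt with hact | hinact
  · filter_upwards [self_mem_nhdsWithin] with t (ht : 0 < t)
    have := mul_neg_of_pos_of_neg ht (hh i hi hact)
    linarith
  · have hcont : Tendsto (fun t : ℝ => ⟪u i, β⟫ + t * ⟪u i, h⟫) (𝓝 0) (𝓝 ⟪u i, β⟫) := by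
      have : Continuous fun t : ℝ => ⟪u i, β⟫ + t * ⟪u i, h⟫ := by fun_prop
      simpa using this.tendsto 0
    exact nhdsWithin_le_nhds (hcont.eventually (gt_mem_nhds hinact))

end PolyhedralMax

theorem Submodule.exists_mem_forall_inner_neg_of_disjoint_orthogonal {E : Type*}
    [NormedAddCommGroup E] [InnerProductSpace ℝ E] [FiniteDimensional ℝ E]
    (K : Submodule ℝ E) {C : Set E} (hconv : Convex ℝ C) (hcpt : IsCompact C)
    (hdisj : Disjoint C Kᗮ) : ∃ h ∈ K, ∀ c ∈ C, ⟪c, h⟫ < 0 := by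
  obtain ⟨f, a, b, hfC, hab, hfK⟩ := geometric_hahn_banach_compact_closed hconv hcpt
    Kᗮ.convex K.isClosed_orthogonal hdisj
  have hb : b < 0 := by simpa using hfK 0 Kᗮ.zero_mem
  -- `f` is bounded below on the subspace `Kᗮ`, hence vanishes there
  have hfK0 : ∀ w ∈ Kᗮ, f w = 0 := by
    intro w hw
    by_contra hfw
    have := hfK _ (Kᗮ.smul_mem (b / f w) hw)
    rw [map_smul, smul_eq_mul, div_mul_cancel₀ _ hfw] at this
    exact lt_irrefl _ this
  set g := (InnerProductSpace.toDual ℝ E).symm f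
  have hg : ∀ x, ⟪g, x⟫ = f x := fun x => InnerProductSpace.toDual_symm_apply
  refine ⟨g, ?_, fun c hc => ?_⟩
  · rw [← K.orthogonal_orthogonal, Submodule.mem_orthogonal]
    intro w hw
    rw [real_inner_comm, hg, hfK0 w hw]
  · rw [real_inner_comm, hg]
    linarith [hfC c hc]

section Subdifferential

variable {p : ℕ} {pen : EuclideanSpace ℝ (Fin p) → ℝ} {β : EuclideanSpace ℝ (Fin p)}

theorem convex_subdiff : Convex ℝ (subdiff pen β) := by
  intro x hx y hy a b ha hb hab c
  calc pen β + ⟪a • x + b • y, c - β⟫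
      = a * (pen β + ⟪x, c - β⟫) + b * (pen β + ⟪y, c - β⟫) := by
        rw [inner_add_left, real_inner_smul_left, real_inner_smul_left]
        linear_combination (-pen β) * hab
    _ ≤ a * pen c + b * pen c := by gcongr; exacts [hx c, hy c]
    _ = pen c := by rw [← add_mul, hab, one_mul]

theorem le_of_mem_orthogonal_of_mem_subdiff {K : Submodule ℝ (EuclideanSpace ℝ (Fin p))}
    {v : EuclideanSpace ℝ (Fin p)} (hvK : v ∈ Kᗮ) (hv : v ∈ subdiff pen β)
    {h : EuclideanSpace ℝ (Fin p)} (hh : h ∈ K) : pen β ≤ pen (β + h) := by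
  simpa [K.inner_left_of_mem_orthogonal hh hvK] using hv (β + h)

variable {ι : Type*} {s : Finset ι} {hs : s.Nonempty} {u : ι → EuclideanSpace ℝ (Fin p)}

theorem convexHull_active_subset_subdiff (hpen : ∀ x, pen x = s.sup' hs fun i => ⟪u i, x⟫) :
    convexHull ℝ (u '' {i | i ∈ s ∧ ⟪u i, β⟫ = pen β}) ⊆ subdiff pen β := by
  refine convexHull_min ?_ convex_subdiff
  rintro _ ⟨i, ⟨hi, hact⟩, rfl⟩ b
  rw [inner_sub_right, hact, add_sub_cancel, hpen]
  exact Finset.le_sup' (fun i => ⟪u i, b⟫) hi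

/-- The polyhedral case of the optimality condition `0 ∈ ∂pen(β) + Kᗮ` for minimizing `pen`
over the affine space `β + K`; separating `Kᗮ` from the convex hull of the active pieces
produces a descent direction in `K`. -/
theorem Submodule.nonempty_orthogonal_inter_subdiff (K : Submodule ℝ (EuclideanSpace ℝ (Fin p)))
    (hpen : ∀ x, pen x = s.sup' hs fun i => ⟪u i, x⟫) (hmin : ∀ h ∈ K, pen β ≤ pen (β + h)) :
    ((Kᗮ : Set (EuclideanSpace ℝ (Fin p))) ∩ subdiff pen β).Nonempty := by
  by_contra hempty
  set active := {i | i ∈ s ∧ ⟪u i, β⟫ = pen β}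
  have hfin : (u '' active).Finite := (s.finite_toSet.subset fun _ hi => hi.1).image u
  have hdisj : Disjoint (convexHull ℝ (u '' active)) Kᗮ := Set.disjoint_left.2
    fun c hc hcK => hempty ⟨c, hcK, convexHull_active_subset_subdiff hpen hc⟩
  obtain ⟨h, hK, hneg⟩ := K.exists_mem_forall_inner_neg_of_disjoint_orthogonal
    (convex_convexHull ℝ _) (hfin.isCompact_convexHull ℝ) hdisj
  obtain ⟨t, ht⟩ := exists_sup'_inner_add_smul_lt hs u (β := β) (h := h) fun i hi hact =>
    hneg _ (subset_convexHull _ _ ⟨i, ⟨hi, by rw [hpen]; exact hact⟩, rfl⟩)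
  rw [← hpen, ← hpen] at ht
  exact (hmin _ (K.smul_mem t hK)).not_gt ht

end Subdifferential

section PenalizedLeastSquares

variable {p : ℕ} {F : Type*} [NormedAddCommGroup F] [InnerProductSpace ℝ F]
  [FiniteDimensional ℝ F] (A : EuclideanSpace ℝ (Fin p) →ₗ[ℝ] F)
  {pen : EuclideanSpace ℝ (Fin p) → ℝ} {lam : ℝ}

theorem adjoint_smul_residual_mem_subdiff (hlam : 0 < lam) (hpen : ConvexOn ℝ univ pen)
    {y : F} {βh : EuclideanSpace ℝ (Fin p)}
    (hmin : IsMinOn (fun b => (1/2) * ‖y - A b‖ ^ 2 + lam * pen b) univ βh) :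
    A.adjoint (lam⁻¹ • (y - A βh)) ∈ subdiff pen βh := by
  intro b
  set r := y - A βh
  set c := A b - A βh
  -- the one-sided derivative of the objective at `βh` towards `b` is nonnegative
  have hslope : ∀ t ∈ Ioc (0 : ℝ) 1,
      ⟪r, c⟫ - lam * (pen b - pen βh) ≤ t * (‖c‖ ^ 2 / 2) := by
    rintro t ⟨ht0, ht1⟩
    have hm := isMinOn_univ_iff.1 hmin ((1 - t) • βh + t • b)
    have hres : y - A ((1 - t) • βh + t • b) = r - t • c := by
      simp only [r, c, map_add, map_smul]
      module
    have hcvx := hpen.2 (mem_univ βh) (mem_univ b) (sub_nonneg.2 ht1) ht0.le (by ring)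
    simp only [smul_eq_mul] at hcvx
    rw [hres, norm_sub_sq_real r (t • c), norm_smul, real_inner_smul_right, Real.norm_eq_abs,
      abs_of_pos ht0] at hm
    have : t * (⟪r, c⟫ - lam * (pen b - pen βh)) ≤ t * (t * (‖c‖ ^ 2 / 2)) := by
      nlinarith [mul_le_mul_of_nonneg_left hcvx hlam.le]
    exact le_of_mul_le_mul_left this ht0
  have hlim : Tendsto (fun t : ℝ => t * (‖c‖ ^ 2 / 2)) (𝓝[>] 0) (𝓝 0) := by
    have : Continuous fun t : ℝ => t * (‖c‖ ^ 2 / 2) := by fun_prop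
    simpa using (this.tendsto 0).mono_left nhdsWithin_le_nhds
  have hkey := ge_of_tendsto hlim (eventually_of_mem (Ioc_mem_nhdsGT one_pos) hslope)
  have hinner : ⟪A.adjoint (lam⁻¹ • r), b - βh⟫ = lam⁻¹ * ⟪r, c⟫ := by
    rw [LinearMap.adjoint_inner_left, map_sub, real_inner_smul_left]
  rw [hinner]
  have : lam⁻¹ * ⟪r, c⟫ ≤ pen b - pen βh := by
    rw [inv_mul_le_iff₀ hlam]
    linarith
  linarith

theorem isMinOn_of_adjoint_mem_subdiff (hlam : 0 ≤ lam) {z : F} {β : EuclideanSpace ℝ (Fin p)}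
    (hz : A.adjoint z ∈ subdiff pen β) :
    IsMinOn (fun b => (1/2) * ‖A β + lam • z - A b‖ ^ 2 + lam * pen b) univ β := by
  refine isMinOn_univ_iff.2 fun b => ?_
  have hsub : pen β + ⟪z, A b - A β⟫ ≤ pen b := by
    simpa [LinearMap.adjoint_inner_left] using hz b
  have hres : A β + lam • z - A b = lam • z - (A b - A β) := by abel
  rw [add_sub_cancel_left, hres, norm_sub_sq_real, real_inner_smul_left]
  nlinarith [sq_nonneg ‖A b - A β‖, mul_le_mul_of_nonneg_left hsub hlam]

end PenalizedLeastSquares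

section Matrix

variable {n p : ℕ} (X : Matrix (Fin n) (Fin p) ℝ)

theorem rowSpace_eq_range_adjoint :
    rowSpace X = Set.range (LinearMap.adjoint (Matrix.toEuclideanLin X)) := by
  rw [← Matrix.toEuclideanLin_conjTranspose_eq_adjoint,
    Matrix.conjTranspose_eq_transpose_of_trivial]
  rfl

theorem mem_Smin_iff {lam : ℝ} {pen : EuclideanSpace ℝ (Fin p) → ℝ}
    {y : EuclideanSpace ℝ (Fin n)} {βh : EuclideanSpace ℝ (Fin p)} :
    βh ∈ Smin X lam pen y ↔ IsMinOn
      (fun b => (1/2) * ‖y - Matrix.toEuclideanLin X b‖ ^ 2 + lam * pen b) univ βh := by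
  rw [isMinOn_univ_iff]
  exact ⟨fun h b => h b.ofLp, fun h b => h (WithLp.toLp 2 b)⟩

end Matrix

theorem accessibility_characterization_general {n p k : ℕ}
    (X : Matrix (Fin n) (Fin p) ℝ) (lam : ℝ) (hlam : 0 < lam)
    (u : Fin (k + 1) → EuclideanSpace ℝ (Fin p))
    (pen : EuclideanSpace ℝ (Fin p) → ℝ)
    (hpen : ∀ x, pen x = Finset.univ.sup' Finset.univ_nonempty fun i => ⟪u i, x⟫)
    (β : EuclideanSpace ℝ (Fin p)) :
    ((∃ y : EuclideanSpace ℝ (Fin n), ∃ βh ∈ Smin X lam pen y,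
        subdiff pen βh = subdiff pen β)
      ↔ (rowSpace X ∩ subdiff pen β).Nonempty)
    ∧ ((rowSpace X ∩ subdiff pen β).Nonempty
      ↔ ∀ b, X.mulVec β = X.mulVec b → pen β ≤ pen (WithLp.toLp 2 b)) := by
  set A := Matrix.toEuclideanLin X
  have hconv : ConvexOn ℝ univ pen := funext hpen ▸ convexOn_sup'_inner _ u
  have hrowK : rowSpace X = (LinearMap.ker A)ᗮ := by
    rw [rowSpace_eq_range_adjoint, LinearMap.orthogonal_ker]
    rfl
  have hker : ∀ b : EuclideanSpace ℝ (Fin p),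
      X.mulVec β = X.mulVec b ↔ b - β ∈ LinearMap.ker A := by
    intro b
    rw [LinearMap.mem_ker, map_sub, sub_eq_zero, eq_comm]
    exact (WithLp.toLp_injective 2).eq_iff.symm
  refine ⟨⟨?_, ?_⟩, ⟨?_, ?_⟩⟩
  · rintro ⟨y, βh, hβh, hsub⟩
    have hmem := adjoint_smul_residual_mem_subdiff A hlam hconv ((mem_Smin_iff X).1 hβh)
    rw [hsub] at hmem
    exact ⟨_, by rw [rowSpace_eq_range_adjoint]; exact ⟨_, rfl⟩, hmem⟩
  · rintro ⟨_, hrow, hs⟩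
    rw [rowSpace_eq_range_adjoint] at hrow
    obtain ⟨z, rfl⟩ := hrow
    exact ⟨A β + lam • z, β, (mem_Smin_iff X).2 (isMinOn_of_adjoint_mem_subdiff A hlam.le hs), rfl⟩
  · rintro ⟨v, hrow, hs⟩ b hb
    rw [hrowK] at hrow
    simpa using le_of_mem_orthogonal_of_mem_subdiff hrow hs ((hker (WithLp.toLp 2 b)).1 hb)
  · intro hmin
    rw [hrowK]
    refine (LinearMap.ker A).nonempty_orthogonal_inter_subdiff hpen fun h hh => ?_
    exact hmin _ ((hker (β + h)).2 (by rwa [add_sub_cancel_left]))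

/-- Characterization of accessible patterns: (i) accessibility of the pattern
of `β` w.r.t. `X` and `λ·pen`, (ii) `row(X) ∩ ∂pen(β) ≠ ∅`, and (iii) `Xβ = Xb ⟹
pen(β) ≤ pen(b)` are all equivalent. -/
theorem accessibility_characterization {n p k : ℕ}
    (X : Matrix (Fin n) (Fin p) ℝ) (lam : ℝ) (hlam : 0 < lam)
    (u : Fin (k + 1) → EuclideanSpace ℝ (Fin p)) (hu : u 0 = 0)
    (pen : EuclideanSpace ℝ (Fin p) → ℝ)
    (hpen : ∀ x, pen x = Finset.univ.sup' Finset.univ_nonempty fun i => ⟪u i, x⟫)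
    (β : EuclideanSpace ℝ (Fin p)) :
    ((∃ y : EuclideanSpace ℝ (Fin n), ∃ βh ∈ Smin X lam pen y,
        subdiff pen βh = subdiff pen β)
      ↔ (rowSpace X ∩ subdiff pen β).Nonempty)
    ∧ ((rowSpace X ∩ subdiff pen β).Nonempty
      ↔ ∀ b, X.mulVec β = X.mulVec b → pen β ≤ pen (WithLp.toLp 2 b)) :=
  accessibility_characterization_general X lam hlam u pen hpen β
end
end
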